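/- arXiv:1304.1049 — 2 statements merged into one kernel-verified Lean document; each statement's English description precedes it below -/
import Mathlib

section
/- Let λ̄ ≥ 1 and, for each k ∈ ℤ³ with |k| = λ̄, let A_k ∈ ℝ³ satisfy A_k · k = 0, |A_k| = 1/√2, and A_{−k} = A_k; set B_k := A_k + i (k/|k|) × A_k ∈ ℂ³. Then for any coefficients a_k ∈ ℂ with conj(a_k) = a_{−k}, the (real-valued) vector field W(ξ) := Σ_{|k|=λ̄} a_k B_k e^{i k·ξ} satisfies div(W ⊗ W) = ∇(|W|²/2); in particular (W, −|W|²/2) is a stationary solution of the incompressible Euler equations. -/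
open scoped BigOperators

noncomputable section

/-- The cross product of two vectors in `ℝ³`. -/
def cross3 (u v : Fin 3 → ℝ) : Fin 3 → ℝ :=
  ![u 1 * v 2 - u 2 * v 1, u 2 * v 0 - u 0 * v 2, u 0 * v 1 - u 1 * v 0]

/-!
A plane wave `B e^{i k·ξ}` with `B ⊥ k` and `i k × B = λ B` is divergence free and an
eigenfield of the curl with eigenvalue `λ`; for `B = A + i (k/λ) × A` with `A ⊥ k` and
`|k| = λ` the second identity is the triple product expansion
`k × (k × A) = (k·A) k - |k|² A = -λ² A`. Both properties are linear in the field, so they pass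
to the superposition `W` and to its real part `u`. For any field,
`div (u ⊗ u) = (u·∇) u + u div u` and `(u·∇) u = ∇ (|u|²/2) - u × curl u`; here `div u = 0` and
`u × curl u = λ u × u = 0`.
-/

open Complex Matrix

section PlaneWave

variable {ι : Type*} [Fintype ι]

def planeWave (k x : ι → ℝ) : ℂ := exp (I * (k ⬝ᵥ x : ℝ))

theorem hasFDerivAt_planeWave (k x : ι → ℝ) :
    HasFDerivAt (planeWave k)
      ((planeWave k x * I) • ofRealCLM ∘L (dotProductBilin ℝ ℝ k).toContinuousLinearMap) x := by
  have hphase : HasFDerivAt (fun y => I * ((k ⬝ᵥ y : ℝ) : ℂ))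
      (I • ofRealCLM ∘L (dotProductBilin ℝ ℝ k).toContinuousLinearMap) x :=
    (ofRealCLM ∘L (dotProductBilin ℝ ℝ k).toContinuousLinearMap).hasFDerivAt.const_smul I
  rw [← smul_smul]
  exact hphase.cexp

variable {α : Type*} (S : Finset α) (c : α → ℂ) (κ : α → ι → ℝ)

theorem hasFDerivAt_re_sum_planeWave (x : ι → ℝ) :
    HasFDerivAt (fun y => (∑ k ∈ S, c k * planeWave (κ k) y).re)
      (reCLM ∘L ∑ k ∈ S, c k • (planeWave (κ k) x * I) •
        ofRealCLM ∘L (dotProductBilin ℝ ℝ (κ k)).toContinuousLinearMap) x :=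
  reCLM.hasFDerivAt.comp x
    (HasFDerivAt.fun_sum fun k _ => (hasFDerivAt_planeWave (κ k) x).const_smul (c k))

theorem fderiv_re_sum_planeWave_apply (x v : ι → ℝ) :
    fderiv ℝ (fun y => (∑ k ∈ S, c k * planeWave (κ k) y).re) x v
      = (∑ k ∈ S, c k * (I * (κ k ⬝ᵥ v : ℝ)) * planeWave (κ k) x).re := by
  rw [(hasFDerivAt_re_sum_planeWave S c κ x).fderiv]
  simp only [ContinuousLinearMap.comp_apply, _root_.sum_apply, reCLM_apply]
  congr 1
  refine Finset.sum_congr rfl fun k _ => ?_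
  simp only [_root_.smul_apply, ContinuousLinearMap.comp_apply, ofRealCLM_apply,
    LinearMap.coe_toContinuousLinearMap', dotProductBilin_apply_apply, smul_eq_mul]
  ring

end PlaneWave

section Jacobian

variable {ι : Type*} [Fintype ι] [DecidableEq ι]

def jacobian (u : (ι → ℝ) → ι → ℝ) (x : ι → ℝ) : Matrix ι ι ℝ :=
  of fun i j => fderiv ℝ (fun y => u y i) x (Pi.single j 1)

def divergence (u : (ι → ℝ) → ι → ℝ) (x : ι → ℝ) : ℝ := (jacobian u x).trace

variable {u : (ι → ℝ) → ι → ℝ} {x : ι → ℝ}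

theorem sum_fderiv_mul_apply (hu : ∀ i, DifferentiableAt ℝ (fun y => u y i) x) (i : ι) :
    ∑ j, fderiv ℝ (fun y => u y i * u y j) x (Pi.single j 1)
      = (jacobian u x *ᵥ u x) i + u x i * divergence u x := by
  simp only [divergence, trace, diag, mulVec, dotProduct, Finset.mul_sum,
    ← Finset.sum_add_distrib]
  refine Finset.sum_congr rfl fun j _ => ?_
  simp only [fderiv_fun_mul (hu i) (hu j), jacobian, of_apply, _root_.add_apply,
    _root_.smul_apply, smul_eq_mul]
  ring

theorem fderiv_half_sum_sq_apply (hu : ∀ i, DifferentiableAt ℝ (fun y => u y i) x) (i : ι) :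
    fderiv ℝ (fun y => (∑ j, u y j ^ 2) / 2) x (Pi.single i 1)
      = ((jacobian u x)ᵀ *ᵥ u x) i := by
  have h := (HasFDerivAt.fun_sum (u := Finset.univ) fun j _ =>
    (hu j).hasFDerivAt.pow 2).mul_const (2⁻¹ : ℝ)
  simp only [← div_eq_mul_inv] at h
  rw [h.fderiv]
  simp only [mulVec, dotProduct, jacobian, transpose_apply, of_apply, Finset.smul_sum,
    _root_.smul_apply, _root_.sum_apply, smul_eq_mul, nsmul_eq_mul]
  refine Finset.sum_congr rfl fun j _ => ?_
  ring

end Jacobian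

section Curl

def axialVector {R : Type*} [Ring R] (J : Matrix (Fin 3) (Fin 3) R) : Fin 3 → R :=
  ![J 2 1 - J 1 2, J 0 2 - J 2 0, J 1 0 - J 0 1]

theorem mulVec_sub_transpose_mulVec {R : Type*} [CommRing R] (J : Matrix (Fin 3) (Fin 3) R)
    (v : Fin 3 → R) : J *ᵥ v - Jᵀ *ᵥ v = axialVector J ⨯₃ v := by
  ext i
  fin_cases i <;>
  · simp only [Fin.zero_eta, Fin.mk_one, Fin.reduceFinMk, Pi.sub_apply, mulVec, dotProduct,
      Fin.sum_univ_three, transpose_apply, axialVector, cross_apply, cons_val]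
    ring

def curl (u : (Fin 3 → ℝ) → Fin 3 → ℝ) (x : Fin 3 → ℝ) : Fin 3 → ℝ :=
  axialVector (jacobian u x)

theorem sum_fderiv_mul_eq_fderiv_half_sum_sq_of_curl_eq_smul {u : (Fin 3 → ℝ) → Fin 3 → ℝ}
    {x : Fin 3 → ℝ} (hu : ∀ i, DifferentiableAt ℝ (fun y => u y i) x) {c : ℝ}
    (hdiv : divergence u x = 0) (hcurl : curl u x = c • u x) (i : Fin 3) :
    ∑ j, fderiv ℝ (fun y => u y i * u y j) x (Pi.single j 1)
      = fderiv ℝ (fun y => (∑ j, u y j ^ 2) / 2) x (Pi.single i 1) := by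
  have hconvective : jacobian u x *ᵥ u x = (jacobian u x)ᵀ *ᵥ u x := by
    rw [← sub_eq_zero, mulVec_sub_transpose_mulVec, ← curl, hcurl, map_smul,
      LinearMap.smul_apply, cross_self, smul_zero]
  rw [sum_fderiv_mul_apply hu, fderiv_half_sum_sq_apply hu, hdiv, mul_zero, add_zero,
    hconvective]

end Curl

section BeltramiVector

/-- The paper's `B_k = A_k + i (k/|k|) × A_k`, for `κ = k` and `lam = |k|`. -/
def beltramiVector (lam : ℝ) (κ α : Fin 3 → ℝ) : Fin 3 → ℂ :=
  ofReal ∘ α + I • ofReal ∘ ((lam⁻¹ • κ) ⨯₃ α)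

theorem ofReal_comp_cross (u v : Fin 3 → ℝ) :
    ofReal ∘ (u ⨯₃ v) = (ofReal ∘ u) ⨯₃ (ofReal ∘ v) := by
  ext i
  fin_cases i <;> simp [cross_apply]

theorem ofReal_comp_dotProduct {n : Type*} [Fintype n] (u v : n → ℝ) :
    (ofReal ∘ u) ⬝ᵥ (ofReal ∘ v) = ((u ⬝ᵥ v : ℝ) : ℂ) := by
  simp [dotProduct]

variable {lam : ℝ} {κ α : Fin 3 → ℝ}

theorem dotProduct_beltramiVector (hα : α ⬝ᵥ κ = 0) :
    (ofReal ∘ κ) ⬝ᵥ beltramiVector lam κ α = 0 := by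
  rw [beltramiVector, dotProduct_add, dotProduct_smul, ofReal_comp_dotProduct,
    ofReal_comp_dotProduct, dotProduct_comm, hα, map_smul, LinearMap.smul_apply, dotProduct_smul,
    dot_self_cross]
  simp

theorem I_smul_cross_beltramiVector (hlam : lam ≠ 0) (hκ : κ ⬝ᵥ κ = lam ^ 2)
    (hα : α ⬝ᵥ κ = 0) :
    I • ((ofReal ∘ κ) ⨯₃ beltramiVector lam κ α) = (lam : ℂ) • beltramiVector lam κ α := by
  set β := (lam⁻¹ • κ) ⨯₃ α with hβ
  have hκα : κ ⨯₃ α = lam • β := by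
    rw [hβ, map_smul, LinearMap.smul_apply, smul_smul, mul_inv_cancel₀ hlam, one_smul]
  have hκβ : κ ⨯₃ β = -lam • α := by
    rw [cross_cross_eq_smul_sub_smul', dotProduct_comm, hα, zero_smul, zero_sub,
      smul_dotProduct, hκ, smul_eq_mul, ← neg_smul]
    field_simp
  rw [beltramiVector, map_add, map_smul, ← ofReal_comp_cross, ← ofReal_comp_cross, hκα, hκβ]
  ext i
  simp only [Pi.smul_apply, Pi.add_apply, Function.comp_apply, smul_eq_mul, ofReal_mul,
    ofReal_neg]
  linear_combination (-(lam * α i : ℂ)) * I_sq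

end BeltramiVector

section BeltramiField

variable {α : Type*} (S : Finset α) (c : α → ℂ) (B : α → Fin 3 → ℂ) (κ : α → Fin 3 → ℝ)

theorem jacobian_re_sum_planeWave (x : Fin 3 → ℝ) (i j : Fin 3) :
    jacobian (fun y i => (∑ k ∈ S, c k * B k i * planeWave (κ k) y).re) x i j
      = (∑ k ∈ S, c k * B k i * (I * κ k j) * planeWave (κ k) x).re := by
  rw [jacobian, of_apply, fderiv_re_sum_planeWave_apply]
  simp [dotProduct_single]

theorem divergence_re_sum_planeWave (hB : ∀ k ∈ S, (ofReal ∘ κ k) ⬝ᵥ B k = 0)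
    (x : Fin 3 → ℝ) :
    divergence (fun y i => (∑ k ∈ S, c k * B k i * planeWave (κ k) y).re) x = 0 := by
  simp only [divergence, trace, diag, jacobian_re_sum_planeWave, ← re_sum]
  rw [Finset.sum_comm, Finset.sum_eq_zero, zero_re]
  intro k hk
  calc ∑ i, c k * B k i * (I * κ k i) * planeWave (κ k) x
      = c k * I * planeWave (κ k) x * ((ofReal ∘ κ k) ⬝ᵥ B k) := by
        simp only [dotProduct, Finset.mul_sum, Function.comp_apply]
        exact Finset.sum_congr rfl fun i _ => by ring
    _ = 0 := by rw [hB k hk, mul_zero]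

theorem curl_re_sum_planeWave {lam : ℝ}
    (hB : ∀ k ∈ S, I • ((ofReal ∘ κ k) ⨯₃ B k) = (lam : ℂ) • B k) (x : Fin 3 → ℝ) :
    curl (fun y i => (∑ k ∈ S, c k * B k i * planeWave (κ k) y).re) x
      = lam • fun i => (∑ k ∈ S, c k * B k i * planeWave (κ k) x).re := by
  have hcurl : ∀ i, curl (fun y i => (∑ k ∈ S, c k * B k i * planeWave (κ k) y).re) x i
      = (∑ k ∈ S, c k * (I • ((ofReal ∘ κ k) ⨯₃ B k)) i * planeWave (κ k) x).re := by
    intro i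
    fin_cases i <;>
    · simp only [curl, axialVector, Fin.zero_eta, Fin.mk_one, Fin.reduceFinMk, cons_val,
        jacobian_re_sum_planeWave, ← sub_re, ← Finset.sum_sub_distrib]
      congr 1
      refine Finset.sum_congr rfl fun k _ => ?_
      simp only [cross_apply, Function.comp_apply, Pi.smul_apply, cons_val, smul_eq_mul]
      ring
  ext i
  rw [hcurl, Finset.sum_congr rfl fun k hk => by rw [hB k hk], Pi.smul_apply, smul_eq_mul,
    ← re_ofReal_mul, Finset.mul_sum]
  congr 1
  exact Finset.sum_congr rfl fun k _ => by simp only [Pi.smul_apply, smul_eq_mul]; ring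

end BeltramiField

theorem beltrami_stationary_euler_general
    (lam : ℝ) (hlam : 1 ≤ lam)
    (S : Finset (Fin 3 → ℤ))
    (hSnorm : ∀ k ∈ S, Real.sqrt (∑ i, ((k i : ℝ)) ^ 2) = lam)
    (A : (Fin 3 → ℤ) → (Fin 3 → ℝ))
    (hAperp : ∀ k ∈ S, ∑ i, A k i * (k i : ℝ) = 0)
    (a : (Fin 3 → ℤ) → ℂ)
    (B : (Fin 3 → ℤ) → (Fin 3 → ℂ))
    (hB : ∀ k i, B k i = (A k i : ℂ)
      + Complex.I * ((cross3 (fun j => (k j : ℝ) / lam) (A k) i : ℝ) : ℂ))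
    (W : (Fin 3 → ℝ) → (Fin 3 → ℂ))
    (hW : ∀ ξ i, W ξ i
      = ∑ k ∈ S, a k * B k i * Complex.exp (Complex.I * ((∑ j, (k j : ℝ) * ξ j : ℝ) : ℂ)))
    -- the real-valued vector field determined by `W`
    (Wr : (Fin 3 → ℝ) → (Fin 3 → ℝ))
    (hWr : ∀ ξ i, Wr ξ i = (W ξ i).re) :
    -- `div (W ⊗ W) = ∇ (|W|²/2)`
    (∀ ξ (i : Fin 3),
      (∑ j, fderiv ℝ (fun x => Wr x i * Wr x j) ξ (Pi.single j 1))
        = fderiv ℝ (fun x => (∑ j, (Wr x j) ^ 2) / 2) ξ (Pi.single i 1)) ∧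
    -- in particular `(W, −|W|²/2)` is a stationary solution of the Euler equations:
    (∀ ξ (i : Fin 3),
      (∑ j, fderiv ℝ (fun x => Wr x i * Wr x j) ξ (Pi.single j 1))
        + fderiv ℝ (fun x => -((∑ j, (Wr x j) ^ 2) / 2)) ξ (Pi.single i 1) = 0) ∧
    (∀ ξ, ∑ i, fderiv ℝ (fun x => Wr x i) ξ (Pi.single i 1) = 0) := by
  set κ : (Fin 3 → ℤ) → Fin 3 → ℝ := fun k j => (k j : ℝ) with hκ
  have hB_eq : B = fun k => beltramiVector lam (κ k) (A k) := by
    funext k i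
    rw [hB, show (fun j => (k j : ℝ) / lam) = lam⁻¹ • κ k from funext fun j => div_eq_inv_mul _ _]
    rfl
  have hκ_norm : ∀ k ∈ S, κ k ⬝ᵥ κ k = lam ^ 2 := fun k hk => by
    rw [← hSnorm k hk, Real.sq_sqrt (by positivity)]
    simp only [hκ, dotProduct, sq]
  have hWr_eq : Wr = fun x i => (∑ k ∈ S, a k * B k i * planeWave (κ k) x).re := by
    funext x i
    rw [hWr, hW]
    rfl
  subst hWr_eq
  have hdiv := divergence_re_sum_planeWave S a B κ fun k hk => by
    rw [hB_eq]; exact dotProduct_beltramiVector (hAperp k hk)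
  have hcurl := curl_re_sum_planeWave S a B κ fun k hk => by
    rw [hB_eq]; exact I_smul_cross_beltramiVector (by linarith) (hκ_norm k hk) (hAperp k hk)
  have heuler : ∀ ξ i, _ := fun ξ => sum_fderiv_mul_eq_fderiv_half_sum_sq_of_curl_eq_smul
    (fun i => (hasFDerivAt_re_sum_planeWave S _ κ ξ).differentiableAt) (hdiv ξ) (hcurl ξ)
  refine ⟨heuler, fun ξ i => ?_, hdiv⟩
  rw [heuler, fderiv_fun_neg, _root_.neg_apply, add_neg_cancel]

/-- **Beltrami flows solve the stationary Euler equations.**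
With the notation of Proposition 2.1 (Beltrami flows), the (real-valued) vector field
`W(ξ) = Σ_{|k|=λ̄} a_k B_k e^{i k·ξ}` satisfies `div (W ⊗ W) = ∇ (|W|²/2)`; in particular
`(W, −|W|²/2)` is a stationary solution of the incompressible Euler equations. -/
theorem beltrami_stationary_euler
    (lam : ℝ) (hlam : 1 ≤ lam)
    (S : Finset (Fin 3 → ℤ))
    (hSnorm : ∀ k ∈ S, Real.sqrt (∑ i, ((k i : ℝ)) ^ 2) = lam)
    (hSneg : ∀ k ∈ S, -k ∈ S)
    (A : (Fin 3 → ℤ) → (Fin 3 → ℝ))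
    (hAperp : ∀ k ∈ S, ∑ i, A k i * (k i : ℝ) = 0)
    (hAnorm : ∀ k ∈ S, Real.sqrt (∑ i, (A k i) ^ 2) = 1 / Real.sqrt 2)
    (hAneg : ∀ k ∈ S, A (-k) = A k)
    (a : (Fin 3 → ℤ) → ℂ)
    (ha : ∀ k ∈ S, (starRingEnd ℂ) (a k) = a (-k))
    (B : (Fin 3 → ℤ) → (Fin 3 → ℂ))
    (hB : ∀ k i, B k i = (A k i : ℂ)
      + Complex.I * ((cross3 (fun j => (k j : ℝ) / lam) (A k) i : ℝ) : ℂ))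
    (W : (Fin 3 → ℝ) → (Fin 3 → ℂ))
    (hW : ∀ ξ i, W ξ i
      = ∑ k ∈ S, a k * B k i * Complex.exp (Complex.I * ((∑ j, (k j : ℝ) * ξ j : ℝ) : ℂ)))
    -- the real-valued vector field determined by `W`
    (Wr : (Fin 3 → ℝ) → (Fin 3 → ℝ))
    (hWr : ∀ ξ i, Wr ξ i = (W ξ i).re) :
    -- `div (W ⊗ W) = ∇ (|W|²/2)`
    (∀ ξ (i : Fin 3),
      (∑ j, fderiv ℝ (fun x => Wr x i * Wr x j) ξ (Pi.single j 1))
        = fderiv ℝ (fun x => (∑ j, (Wr x j) ^ 2) / 2) ξ (Pi.single i 1)) ∧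
    -- in particular `(W, −|W|²/2)` is a stationary solution of the Euler equations:
    (∀ ξ (i : Fin 3),
      (∑ j, fderiv ℝ (fun x => Wr x i * Wr x j) ξ (Pi.single j 1))
        + fderiv ℝ (fun x => -((∑ j, (Wr x j) ^ 2) / 2)) ξ (Pi.single i 1) = 0) ∧
    (∀ ξ, ∑ i, fderiv ℝ (fun x => Wr x i) ξ (Pi.single i 1) = 0) :=
  beltrami_stationary_euler_general lam hlam S hSnorm A hAperp a B hB W hW Wr hWr
end
end

section
/- Let v : 𝕋³ → ℝ³ be a smooth vector field. Suppose u : 𝕋³ → ℝ³ is the smooth solution of Δu = v − ⨍_{𝕋³} v with ⨍_{𝕋³} u = 0, and suppose w : 𝕋³ → ℝ³ is smooth with div w = 0, ⨍_{𝕋³} w = 0, and u − w = ∇φ for some smooth scalar φ (i.e., w is the Leray projection of u). Define the matrix field ℛv := (1/4)(∇w + (∇w)^T) + (3/4)(∇u + (∇u)^T) − (1/2)(div u) Id. Then: (a) ℛv(x) is a symmetric trace-free 3×3 matrix for each x ∈ 𝕋³; and (b) div(ℛv) = v − ⨍_{𝕋³} v. -/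
open scoped BigOperators
open MeasureTheory

noncomputable section

/-- Partial derivative `∂_j f` of a function on `ℝ³`. -/
def pd {F : Type*} [NormedAddCommGroup F] [NormedSpace ℝ F]
    (f : (Fin 3 → ℝ) → F) (j : Fin 3) (x : Fin 3 → ℝ) : F :=
  fderiv ℝ f x (Pi.single j 1)

/-- A fundamental domain of the `(2π)ℤ³`-periodic lattice. -/
def D3 : Set (Fin 3 → ℝ) := Set.univ.pi fun _ => Set.Icc (0 : ℝ) (2 * Real.pi)

/-- `(2π)ℤ³`-periodicity. -/
def Per {F : Type*} (f : (Fin 3 → ℝ) → F) : Prop :=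
  ∀ (n : Fin 3 → ℤ) (x : Fin 3 → ℝ), f (x + fun i => 2 * Real.pi * (n i : ℝ)) = f x

lemma contDiff_pd {f : (Fin 3 → ℝ) → ℝ} (hf : ContDiff ℝ (⊤ : ℕ∞) f) (j : Fin 3) :
    ContDiff ℝ (⊤ : ℕ∞) (pd f j) :=
  (hf.fderiv_right (by simp)).clm_apply contDiff_const

lemma pd_add {f g : (Fin 3 → ℝ) → ℝ} {x : Fin 3 → ℝ} (hf : DifferentiableAt ℝ f x)
    (hg : DifferentiableAt ℝ g x) (j : Fin 3) :
    pd (fun y => f y + g y) j x = pd f j x + pd g j x := by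
  simp [pd, fderiv_fun_add hf hg]

lemma pd_sub {f g : (Fin 3 → ℝ) → ℝ} {x : Fin 3 → ℝ} (hf : DifferentiableAt ℝ f x)
    (hg : DifferentiableAt ℝ g x) (j : Fin 3) :
    pd (fun y => f y - g y) j x = pd f j x - pd g j x := by
  simp [pd, fderiv_fun_sub hf hg]

lemma pd_const_mul {f : (Fin 3 → ℝ) → ℝ} {x : Fin 3 → ℝ} (hf : DifferentiableAt ℝ f x)
    (c : ℝ) (j : Fin 3) :
    pd (fun y => c * f y) j x = c * pd f j x := by
  simp [pd, fderiv_const_mul hf c]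

lemma pd_sum {f : Fin 3 → (Fin 3 → ℝ) → ℝ} {x : Fin 3 → ℝ}
    (hf : ∀ l, DifferentiableAt ℝ (f l) x) (j : Fin 3) :
    pd (fun y => ∑ l, f l y) j x = ∑ l, pd (f l) j x := by
  simp [pd, fderiv_fun_sum (fun l _ => hf l)]

lemma pd_zero (j : Fin 3) (x : Fin 3 → ℝ) : pd (fun _ => (0:ℝ)) j x = 0 := by
  simp [pd]

lemma pd_comm {f : (Fin 3 → ℝ) → ℝ} (hf : ContDiff ℝ (⊤ : ℕ∞) f) (i j : Fin 3) (x : Fin 3 → ℝ) :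
    pd (pd f i) j x = pd (pd f j) i x := by
  have hdf : ContDiff ℝ (⊤ : ℕ∞) (fderiv ℝ f) := hf.fderiv_right (by simp)
  have h1 : ∀ y, HasFDerivAt f (fderiv ℝ f y) y := fun y =>
    (hf.differentiable (by simp) y).hasFDerivAt
  have h2 : HasFDerivAt (fderiv ℝ f) (fderiv ℝ (fderiv ℝ f) x) x :=
    (hdf.differentiable (by simp) x).hasFDerivAt
  have hsym := second_derivative_symmetric h1 h2 (Pi.single i 1) (Pi.single j 1)
  have key : ∀ a b : Fin 3, pd (pd f a) b x
      = fderiv ℝ (fderiv ℝ f) x (Pi.single b 1) (Pi.single a 1) := by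
    intro a b
    have hdx : DifferentiableAt ℝ (fderiv ℝ f) x := hdf.differentiable (by simp) x
    show fderiv ℝ (fun y => (fderiv ℝ f y) (Pi.single a 1)) x (Pi.single b 1) = _
    rw [fderiv_clm_apply hdx (differentiableAt_const _)]
    simp
  rw [key i j, key j i, hsym]

/-- **The operator `ℛ = div⁻¹`** (Definition 4.2 and Lemma 4.3 of De Lellis–Székelyhidi).
Let `v` be a smooth vector field on `𝕋³`, let `u` solve `Δu = v − ⨍v` with `⨍u = 0`, and
let `w` be the Leray projection of `u` (`div w = 0`, `⨍w = 0`, `u − w = ∇φ`).  Then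
`ℛv := (1/4)(∇w + ∇wᵀ) + (3/4)(∇u + ∇uᵀ) − (1/2)(div u) Id` is a symmetric trace-free
matrix field with `div (ℛv) = v − ⨍v`. -/
theorem reyn_op_div_inverse
    (v u w : (Fin 3 → ℝ) → (Fin 3 → ℝ)) (φ : (Fin 3 → ℝ) → ℝ)
    (hv : ContDiff ℝ (⊤ : ℕ∞) v) (hu : ContDiff ℝ (⊤ : ℕ∞) u) (hw : ContDiff ℝ (⊤ : ℕ∞) w)
    (hφ : ContDiff ℝ (⊤ : ℕ∞) φ)
    (hvP : Per v) (huP : Per u) (hwP : Per w) (hφP : Per φ)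
    -- `Δ u = v − ⨍ v` componentwise
    (hΔ : ∀ x i, (∑ j, pd (fun y => pd (fun z => u z i) j y) j x)
        = v x i - ((2 * Real.pi) ^ 3)⁻¹ * ∫ y in D3, v y i)
    -- `⨍ u = 0`
    (huavg : ∀ i, (∫ y in D3, u y i) = 0)
    -- `w` is the Leray projection of `u`
    (hwdiv : ∀ x, ∑ j, pd (fun y => w y j) j x = 0)
    (hwavg : ∀ i, (∫ y in D3, w y i) = 0)
    (hgrad : ∀ x i, u x i - w x i = pd φ i x)
    -- the matrix field `ℛ v`
    (R : (Fin 3 → ℝ) → Fin 3 → Fin 3 → ℝ)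
    (hR : ∀ x i j, R x i j
      = (1 : ℝ) / 4 * (pd (fun y => w y i) j x + pd (fun y => w y j) i x)
        + 3 / 4 * (pd (fun y => u y i) j x + pd (fun y => u y j) i x)
        - 1 / 2 * (∑ l, pd (fun y => u y l) l x) * (if i = j then 1 else 0)) :
    -- (a) `ℛv(x)` is symmetric and trace-free
    (∀ x i j, R x i j = R x j i) ∧
    (∀ x, ∑ i, R x i i = 0) ∧
    -- (b) `div (ℛ v) = v − ⨍ v`
    (∀ x i, (∑ j, pd (fun y => R y i j) j x)
      = v x i - ((2 * Real.pi) ^ 3)⁻¹ * ∫ y in D3, v y i) := by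
  -- component smoothness
  have hu' : ∀ a, ContDiff ℝ (⊤ : ℕ∞) (fun y => u y a) := fun a => contDiff_pi.mp hu a
  have hw' : ∀ a, ContDiff ℝ (⊤ : ℕ∞) (fun y => w y a) := fun a => contDiff_pi.mp hw a
  have hDu : ∀ a b, ContDiff ℝ (⊤ : ℕ∞) (pd (fun y => u y a) b) := fun a b => contDiff_pd (hu' a) b
  have hDw : ∀ a b, ContDiff ℝ (⊤ : ℕ∞) (pd (fun y => w y a) b) := fun a b => contDiff_pd (hw' a) b
  have hφ1 : ∀ a, ContDiff ℝ (⊤ : ℕ∞) (pd φ a) := fun a => contDiff_pd hφ a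
  have hφ2 : ∀ a b, ContDiff ℝ (⊤ : ℕ∞) (pd (pd φ a) b) := fun a b => contDiff_pd (hφ1 a) b
  refine ⟨fun x i j => ?_, fun x => ?_, fun x i => ?_⟩
  · rw [hR, hR]
    by_cases h : i = j
    · subst h; ring
    · rw [if_neg h, if_neg (Ne.symm h)]; ring
  · have hdw := hwdiv x
    rw [Fin.sum_univ_three] at hdw
    simp only [hR, if_pos, Fin.sum_univ_three]
    ring_nf
    linarith [hdw]
  · -- part (b)
    set S : (Fin 3 → ℝ) → ℝ := fun y => ∑ l, pd (fun z => u z l) l y with hSdef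
    have hSsm : ContDiff ℝ (⊤ : ℕ∞) S := ContDiff.sum (fun l _ => hDu l l)
    -- step 1: divergence of the i-th row, termwise
    have step1 : ∀ j, pd (fun y => R y i j) j x
        = 1/4 * pd (pd (fun y => w y i) j) j x + 1/4 * pd (pd (fun y => w y j) i) j x
        + 3/4 * pd (pd (fun y => u y i) j) j x + 3/4 * pd (pd (fun y => u y j) i) j x
        - (if i = j then 1/2 * pd S j x else 0) := by
      intro j
      have e1 : (fun y => R y i j) = fun y =>
          (1/4 * (pd (fun z => w z i) j y + pd (fun z => w z j) i y)
           + 3/4 * (pd (fun z => u z i) j y + pd (fun z => u z j) i y))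
          - (1/2 * (if i = j then (1:ℝ) else 0)) * S y := by
        funext y; rw [hR]; simp only [hSdef]; ring
      have dwij : DifferentiableAt ℝ (pd (fun z => w z i) j) x := (hDw i j).differentiable (by simp) x
      have dwji : DifferentiableAt ℝ (pd (fun z => w z j) i) x := (hDw j i).differentiable (by simp) x
      have duij : DifferentiableAt ℝ (pd (fun z => u z i) j) x := (hDu i j).differentiable (by simp) x
      have duji : DifferentiableAt ℝ (pd (fun z => u z j) i) x := (hDu j i).differentiable (by simp) x
      have dS : DifferentiableAt ℝ S x := hSsm.differentiable (by simp) x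
      rw [e1, pd_sub (by fun_prop) (by fun_prop), pd_const_mul dS,
        pd_add (by fun_prop) (by fun_prop),
        pd_const_mul (by fun_prop), pd_const_mul (by fun_prop),
        pd_add dwij dwji, pd_add duij duji]
      by_cases h : i = j <;> simp [h] <;> ring
    -- alpha : sum over j of ∂_j ∂_i w_j = 0
    have ew0 : (fun y => ∑ l, pd (fun z => w z l) l y) = fun _ => (0:ℝ) := funext hwdiv
    have alpha : ∑ j, pd (pd (fun y => w y j) i) j x = 0 := by
      have : ∀ j, pd (pd (fun y => w y j) i) j x = pd (pd (fun y => w y j) j) i x :=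
        fun j => pd_comm (hw' j) i j x
      rw [Finset.sum_congr rfl (fun j _ => this j),
        ← pd_sum (fun l => (hDw l l).differentiable (by simp) x) i, ew0, pd_zero]
    -- beta : sum over j of ∂_j ∂_i u_j = ∂_i S
    have beta : ∑ j, pd (pd (fun y => u y j) i) j x = pd S i x := by
      have : ∀ j, pd (pd (fun y => u y j) i) j x = pd (pd (fun y => u y j) j) i x :=
        fun j => pd_comm (hu' j) i j x
      rw [Finset.sum_congr rfl (fun j _ => this j),
        ← pd_sum (fun l => (hDu l l).differentiable (by simp) x) i]
    -- w_i = u_i - ∂_i φ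
    have ewu : ∀ a, (fun y => w y a) = fun y => u y a - pd φ a y := by
      intro a; funext y; have := hgrad y a; linarith
    -- gamma : ∂_j∂_j w_i = ∂_j∂_j u_i - ∂_j∂_j∂_i φ
    have gamma : ∀ j, pd (pd (fun y => w y i) j) j x
        = pd (pd (fun y => u y i) j) j x - pd (pd (pd φ i) j) j x := by
      intro j
      have e2 : pd (fun y => w y i) j = fun y => pd (fun z => u z i) j y - pd (pd φ i) j y := by
        funext y
        rw [ewu i, pd_sub ((hu' i).differentiable (by simp) y) ((hφ1 i).differentiable (by simp) y)]
      rw [e2, pd_sub ((hDu i j).differentiable (by simp) x) ((hφ2 i j).differentiable (by simp) x)]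
    -- delta : ∂_i S = ∑_j ∂_j∂_j∂_i φ
    have eS : S = fun y => ∑ l, pd (pd φ l) l y := by
      funext y
      have e3 : ∀ l, pd (fun z => u z l) l y = pd (fun z => w z l) l y + pd (pd φ l) l y := by
        intro l
        have e4 : (fun z => u z l) = fun z => w z l + pd φ l z := by
          funext z; have := hgrad z l; linarith
        rw [e4, pd_add ((hw' l).differentiable (by simp) y) ((hφ1 l).differentiable (by simp) y)]
      simp only [hSdef]
      rw [Finset.sum_congr rfl (fun l _ => e3 l), Finset.sum_add_distrib, hwdiv y, zero_add]
    have delta : pd S i x = ∑ j, pd (pd (pd φ i) j) j x := by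
      rw [eS, pd_sum (fun l => (hφ2 l l).differentiable (by simp) x) i]
      refine Finset.sum_congr rfl (fun l _ => ?_)
      rw [pd_comm (hφ1 l) l i x]
      have e5 : pd (pd φ l) i = pd (pd φ i) l := funext fun y => pd_comm hφ l i y
      rw [e5]
    -- assemble
    have expand : ∑ j, pd (fun y => R y i j) j x
        = 1/4 * ∑ j, pd (pd (fun y => w y i) j) j x
        + 1/4 * ∑ j, pd (pd (fun y => w y j) i) j x
        + 3/4 * ∑ j, pd (pd (fun y => u y i) j) j x
        + 3/4 * ∑ j, pd (pd (fun y => u y j) i) j x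
        - 1/2 * pd S i x := by
      rw [Finset.sum_congr rfl (fun j _ => step1 j)]
      rw [Finset.sum_sub_distrib, Finset.sum_ite_eq]
      simp [Finset.sum_add_distrib, Finset.mul_sum]
    have lapw : ∑ j, pd (pd (fun y => w y i) j) j x
        = ∑ j, pd (pd (fun y => u y i) j) j x - ∑ j, pd (pd (pd φ i) j) j x := by
      rw [Finset.sum_congr rfl (fun j _ => gamma j), Finset.sum_sub_distrib]
    rw [expand, lapw, alpha, beta, delta, ← hΔ x i]
    ring
end
end
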